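/- Let U ⊆ ℝ^{m+1} be bounded, convex, and open, let x ∈ ℝ^{m+1} and r > 0, and let π be the nearest-point projection onto closure(U). Then π maps ∂B(x,r) \ U onto a set containing B(x,r) ∩ ∂U. -/

import Mathlib

/-!
At a boundary point `p` of the open convex set `U` a supporting hyperplane provides an outer
normal `v`. For `t > 0` the point `q = p + t • v` lies outside `closure U`, and `p` is its unique
nearest point there, because the angle at `p` between `q` and any `w ∈ closure U` is not acute.
The ray `t ↦ p + t • v` starts inside `ball x r` and is unbounded, so it meets `sphere x r`.
-/

open Metric RealInnerProductSpace

variable {E : Type*} [NormedAddCommGroup E] [InnerProductSpace ℝ E]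

def IsOuterNormal (K : Set E) (p v : E) : Prop :=
  ∀ w ∈ K, ⟪w - p, v⟫ ≤ 0

theorem Convex.exists_isOuterNormal_closure_of_mem_frontier [CompleteSpace E] {U : Set E}
    (hU : Convex ℝ U) (hopen : IsOpen U) {p : E} (hp : p ∈ frontier U) :
    ∃ v ≠ 0, IsOuterNormal (closure U) p v := by
  have hpU : p ∉ U := fun h => hp.2 (hopen.interior_eq.symm ▸ h)
  obtain ⟨f, hf⟩ := geometric_hahn_banach_open_point hU hopen hpU
  set v := (InnerProductSpace.toDual ℝ E).symm f
  have hfv : ∀ w, f w = ⟪v, w⟫ := fun w => InnerProductSpace.toDual_symm_apply.symm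
  have hfp : closure U ⊆ {w | f w ≤ f p} :=
    closure_minimal (fun w hw => (hf w hw).le) (isClosed_le f.continuous continuous_const)
  refine ⟨v, ?_, fun w hw => ?_⟩
  · obtain ⟨u, hu⟩ := closure_nonempty_iff.mp ⟨p, hp.1⟩
    rintro hv
    simpa [hfv, hv] using hf u hu
  · have : ⟪v, w⟫ ≤ ⟪v, p⟫ := by rw [← hfv, ← hfv]; exact hfp hw
    linarith [inner_sub_left (𝕜 := ℝ) w p v, real_inner_comm v w, real_inner_comm v p]

namespace IsOuterNormal

variable {K : Set E} {p v : E}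

theorem add_smul_notMem (hv : IsOuterNormal K p v) (hv0 : v ≠ 0) {t : ℝ} (ht : 0 < t) :
    p + t • v ∉ K := fun hK => by
  have := hv _ hK
  rw [add_sub_cancel_left, real_inner_smul_left, real_inner_self_eq_norm_sq] at this
  exact this.not_gt (by positivity)

theorem eq_of_dist_add_smul_le (hv : IsOuterNormal K p v) {t : ℝ} (ht : 0 ≤ t) {y : E}
    (hy : y ∈ K) (hle : dist (p + t • v) y ≤ dist (p + t • v) p) : y = p := by
  set q := p + t • v
  have hinner : ⟪q - p, y - p⟫ ≤ 0 := by
    rw [add_sub_cancel_left, real_inner_smul_left, real_inner_comm]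
    exact mul_nonpos_of_nonneg_of_nonpos ht (hv y hy)
  -- Pythagoras with an obtuse angle at p: `‖q - y‖² ≥ ‖q - p‖² + ‖y - p‖²`.
  have hpyth := norm_sub_sq_real (q - p) (y - p)
  rw [sub_sub_sub_cancel_right] at hpyth
  rw [dist_eq_norm, dist_eq_norm] at hle
  have hsq : ‖y - p‖ ^ 2 ≤ 0 := by nlinarith [norm_nonneg (q - y)]
  rw [← sub_eq_zero, ← norm_eq_zero]
  nlinarith [norm_nonneg (y - p)]

end IsOuterNormal

theorem exists_pos_add_smul_mem_sphere {F : Type*} [NormedAddCommGroup F] [NormedSpace ℝ F]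
    {x p v : F} {r : ℝ} (hp : p ∈ ball x r) (hv : v ≠ 0) :
    ∃ t : ℝ, 0 < t ∧ p + t • v ∈ sphere x r := by
  set g : ℝ → ℝ := fun t => dist (p + t • v) x
  have hg : Continuous g := by fun_prop
  have hv0 : 0 < ‖v‖ := norm_pos_iff.mpr hv
  set T := (r + dist p x) / ‖v‖
  have hT : 0 ≤ T :=
    div_nonneg (by linarith [mem_ball.mp hp, dist_nonneg (x := p) (y := x)]) hv0.le
  have hgT : r ≤ g T := by
    have hTv : ‖T • v‖ = r + dist p x := by
      rw [norm_smul, Real.norm_of_nonneg hT, div_mul_cancel₀ _ hv0.ne']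
    have := dist_triangle (p + T • v) x p
    rw [dist_comm x p, dist_eq_norm (p + T • v) p, add_sub_cancel_left, hTv] at this
    linarith
  have hg0 : g 0 < r := by simpa [g] using hp
  obtain ⟨t, ht, hgt⟩ := intermediate_value_Icc hT hg.continuousOn ⟨hg0.le, hgT⟩
  refine ⟨t, ht.1.lt_of_ne ?_, hgt⟩
  rintro rfl
  exact hg0.ne hgt

theorem stmt12_general (m : ℕ) (U : Set (EuclideanSpace ℝ (Fin (m + 1))))
    (hU : Convex ℝ U) (hopen : IsOpen U)
    (x : EuclideanSpace ℝ (Fin (m + 1))) (r : ℝ)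
    (π : EuclideanSpace ℝ (Fin (m + 1)) → EuclideanSpace ℝ (Fin (m + 1)))
    (hproj : ∀ z, π z ∈ closure U ∧ ∀ w ∈ closure U, dist z (π z) ≤ dist z w) :
    ball x r ∩ frontier U ⊆ π '' (sphere x r \ U) := by
  rintro p ⟨hpball, hpfr⟩
  obtain ⟨v, hv0, hv⟩ := hU.exists_isOuterNormal_closure_of_mem_frontier hopen hpfr
  obtain ⟨t, ht, hq⟩ := exists_pos_add_smul_mem_sphere hpball hv0
  refine ⟨p + t • v, ⟨hq, fun hqU => hv.add_smul_notMem hv0 ht (subset_closure hqU)⟩, ?_⟩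
  obtain ⟨hπ, hπmin⟩ := hproj (p + t • v)
  exact hv.eq_of_dist_add_smul_le ht.le hπ (hπmin p (frontier_subset_closure hpfr))

theorem stmt12 (m : ℕ) (U : Set (EuclideanSpace ℝ (Fin (m + 1))))
    (hU : Convex ℝ U) (hbdd : Bornology.IsBounded U) (hopen : IsOpen U)
    (hne : U.Nonempty) (x : EuclideanSpace ℝ (Fin (m + 1))) (r : ℝ) (hr : 0 < r)
    (π : EuclideanSpace ℝ (Fin (m + 1)) → EuclideanSpace ℝ (Fin (m + 1)))
    (hproj : ∀ z, π z ∈ closure U ∧ ∀ w ∈ closure U, dist z (π z) ≤ dist z w) :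
    ball x r ∩ frontier U ⊆ π '' (sphere x r \ U) :=
  stmt12_general m U hU hopen x r π hproj
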